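/- Let K ⊆ ℝ² be a set with T(K) ⊆ K, and let K̄ denote the topological closure of K. If U, V, Q, R ∈ K̄ with U ≠ V and Q ≠ R, and the lines UV and QR are distinct and not parallel, then the intersection point of the lines UV and QR belongs to K̄. -/

import Mathlib

/-!
Lines in the plane are handled through the 2 × 2 determinant `cross`. Where
`cross (V - U) (R - Q) ≠ 0` the lines `UV` and `QR` meet in exactly one point, given by an
explicit rational function of `U, V, Q, R` that is continuous there. Approximating the four points
by points of `K` keeps the determinant nonzero, so the approximating intersection points lie in
`T(K) ⊆ K`, and they converge to the intersection point of `UV` and `QR`.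
-/

open Set Filter

noncomputable section

/-- The line through two points in the plane `ℝ × ℝ`. -/
def line (a b : ℝ × ℝ) : AffineSubspace ℝ (ℝ × ℝ) := affineSpan ℝ {a, b}

/-- The intersection operation `T`: the set of all intersection points of pairs of
distinct lines through pairs of distinct points of `S`. -/
def interT (S : Set (ℝ × ℝ)) : Set (ℝ × ℝ) :=
  {x | ∃ a ∈ S, ∃ b ∈ S, ∃ c ∈ S, ∃ d ∈ S,
    a ≠ b ∧ c ≠ d ∧ line a b ≠ line c d ∧ x ∈ line a b ∧ x ∈ line c d}

def cross (u v : ℝ × ℝ) : ℝ := u.1 * v.2 - u.2 * v.1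

@[fun_prop]
lemma Continuous.cross {α : Type*} [TopologicalSpace α] {f g : α → ℝ × ℝ}
    (hf : Continuous f) (hg : Continuous g) : Continuous fun x => cross (f x) (g x) := by
  unfold _root_.cross
  fun_prop

lemma cross_sub_right (u v w : ℝ × ℝ) : cross u (v - w) = cross u v - cross u w := by
  simp only [cross, Prod.fst_sub, Prod.snd_sub]
  ring

lemma exists_eq_smul_of_cross_eq_zero {u v : ℝ × ℝ} (hu : u ≠ 0) (h : cross u v = 0) :
    ∃ c : ℝ, v = c • u := by
  unfold cross at h
  by_cases h₁ : u.1 = 0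
  · have h₂ : u.2 ≠ 0 := fun h₂ => hu (Prod.ext h₁ h₂)
    refine ⟨v.2 / u.2, Prod.ext ?_ ?_⟩ <;> simp only [Prod.smul_fst, Prod.smul_snd, smul_eq_mul]
    · field_simp
      linear_combination -h
    · field_simp
  · refine ⟨v.1 / u.1, Prod.ext ?_ ?_⟩ <;> simp only [Prod.smul_fst, Prod.smul_snd, smul_eq_mul]
    · field_simp
    · field_simp
      linear_combination h

lemma eq_zero_of_cross_eq_zero {u v w : ℝ × ℝ} (huv : cross u v ≠ 0) (hu : cross u w = 0)
    (hv : cross v w = 0) : w = 0 := by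
  unfold cross at *
  refine Prod.ext (mul_left_cancel₀ huv ?_) (mul_left_cancel₀ huv ?_) <;>
    simp only [Prod.fst_zero, Prod.snd_zero, mul_zero]
  · linear_combination v.1 * hu - u.1 * hv
  · linear_combination v.2 * hu - u.2 * hv

lemma mem_line_iff {a b x : ℝ × ℝ} : x ∈ line a b ↔ ∃ s : ℝ, x = s • (b - a) + a := by
  rw [line, ← vsub_vadd x a, vadd_left_mem_affineSpan_pair]
  simp only [vsub_eq_sub, vadd_eq_add, sub_add_cancel, eq_sub_iff_add_eq, eq_comm]

lemma mem_line_iff_cross {a b x : ℝ × ℝ} (hab : a ≠ b) :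
    x ∈ line a b ↔ cross (b - a) (x - a) = 0 := by
  rw [mem_line_iff]
  constructor
  · rintro ⟨s, rfl⟩
    simp only [cross, add_sub_cancel_right, Prod.smul_fst, Prod.smul_snd, smul_eq_mul]
    ring
  · intro h
    obtain ⟨s, hs⟩ := exists_eq_smul_of_cross_eq_zero (sub_ne_zero.2 hab.symm) h
    exact ⟨s, eq_add_of_sub_eq hs⟩

lemma direction_line (a b : ℝ × ℝ) : (line a b).direction = ℝ ∙ (b - a) := by
  rw [line, direction_affineSpan, vectorSpan_pair_rev, vsub_eq_sub]

lemma cross_eq_zero_iff_direction_eq {a b c d : ℝ × ℝ} (hab : a ≠ b) (hcd : c ≠ d) :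
    cross (b - a) (d - c) = 0 ↔ (line a b).direction = (line c d).direction := by
  rw [direction_line, direction_line]
  constructor
  · intro h
    obtain ⟨s, hs⟩ := exists_eq_smul_of_cross_eq_zero (sub_ne_zero.2 hab.symm) h
    have hs₀ : s ≠ 0 := by
      rintro rfl
      exact hcd (sub_eq_zero.1 (by simpa using hs)).symm
    rw [hs, Submodule.span_singleton_smul_eq hs₀.isUnit]
  · intro h
    have hdc : d - c ∈ ℝ ∙ (b - a) := by
      rw [h]
      exact Submodule.mem_span_singleton_self _
    obtain ⟨s, hs⟩ := Submodule.mem_span_singleton.1 hdc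
    rw [← hs]
    simp only [cross, Prod.smul_fst, Prod.smul_snd, smul_eq_mul]
    ring

lemma ne_of_cross_sub_ne_zero_left {a b w : ℝ × ℝ} (h : cross (b - a) w ≠ 0) : a ≠ b := by
  rintro rfl
  simp [cross] at h

lemma ne_of_cross_sub_ne_zero_right {c d v : ℝ × ℝ} (h : cross v (d - c) ≠ 0) : c ≠ d := by
  rintro rfl
  simp [cross] at h

lemma eq_of_mem_line_of_mem_line {a b c d x y : ℝ × ℝ} (h : cross (b - a) (d - c) ≠ 0)
    (hx₁ : x ∈ line a b) (hx₂ : x ∈ line c d) (hy₁ : y ∈ line a b) (hy₂ : y ∈ line c d) :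
    x = y := by
  rw [mem_line_iff_cross (ne_of_cross_sub_ne_zero_left h)] at hx₁ hy₁
  rw [mem_line_iff_cross (ne_of_cross_sub_ne_zero_right h)] at hx₂ hy₂
  refine sub_eq_zero.1 (eq_zero_of_cross_eq_zero h ?_ ?_)
  · rw [← sub_sub_sub_cancel_right x y a, cross_sub_right, hx₁, hy₁, sub_self]
  · rw [← sub_sub_sub_cancel_right x y c, cross_sub_right, hx₂, hy₂, sub_self]

/-- The point `s • (b - a) + a` of `line a b` with `s` solving
`cross (d - c) (s • (b - a) + a - c) = 0`. -/
def intersectionPoint (a b c d : ℝ × ℝ) : ℝ × ℝ :=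
  (cross (c - a) (d - c) / cross (b - a) (d - c)) • (b - a) + a

lemma intersectionPoint_mem_left (a b c d : ℝ × ℝ) : intersectionPoint a b c d ∈ line a b :=
  mem_line_iff.2 ⟨_, rfl⟩

lemma intersectionPoint_mem_right {a b c d : ℝ × ℝ} (h : cross (b - a) (d - c) ≠ 0) :
    intersectionPoint a b c d ∈ line c d := by
  have hcross : ∀ s : ℝ, cross (d - c) (s • (b - a) + a - c) =
      cross (c - a) (d - c) - s * cross (b - a) (d - c) := by
    intro s
    simp only [cross, Prod.fst_sub, Prod.snd_sub, Prod.fst_add, Prod.snd_add, Prod.smul_fst,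
      Prod.smul_snd, smul_eq_mul]
    ring
  rw [mem_line_iff_cross (ne_of_cross_sub_ne_zero_right h), intersectionPoint, hcross,
    div_mul_cancel₀ _ h, sub_self]

lemma intersectionPoint_mem_interT {S : Set (ℝ × ℝ)} {a b c d : ℝ × ℝ} (ha : a ∈ S)
    (hb : b ∈ S) (hc : c ∈ S) (hd : d ∈ S) (h : cross (b - a) (d - c) ≠ 0) :
    intersectionPoint a b c d ∈ interT S := by
  have hab := ne_of_cross_sub_ne_zero_left h
  have hcd := ne_of_cross_sub_ne_zero_right h
  have hline : line a b ≠ line c d := fun he =>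
    h ((cross_eq_zero_iff_direction_eq hab hcd).2 (congrArg AffineSubspace.direction he))
  exact ⟨a, ha, b, hb, c, hc, d, hd, hab, hcd, hline, intersectionPoint_mem_left a b c d,
    intersectionPoint_mem_right h⟩

lemma intersectionPoint_mem_closure_interT {S : Set (ℝ × ℝ)} {a b c d : ℝ × ℝ}
    (ha : a ∈ closure S) (hb : b ∈ closure S) (hc : c ∈ closure S) (hd : d ∈ closure S)
    (h : cross (b - a) (d - c) ≠ 0) : intersectionPoint a b c d ∈ closure (interT S) := by
  let D : ((ℝ × ℝ) × (ℝ × ℝ)) × ((ℝ × ℝ) × (ℝ × ℝ)) → ℝ := fun p =>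
    cross (p.1.2 - p.1.1) (p.2.2 - p.2.1)
  let F : ((ℝ × ℝ) × (ℝ × ℝ)) × ((ℝ × ℝ) × (ℝ × ℝ)) → ℝ × ℝ := fun p =>
    intersectionPoint p.1.1 p.1.2 p.2.1 p.2.2
  have hD : Continuous D := by fun_prop
  have hF : ContinuousAt F ((a, b), (c, d)) := by
    simp only [F, intersectionPoint]
    fun_prop (disch := exact h)
  have hclosure : ((a, b), (c, d)) ∈ closure ({p | D p ≠ 0} ∩ (S ×ˢ S) ×ˢ (S ×ˢ S)) :=
    (isOpen_ne_fun hD continuous_const).inter_closure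
      ⟨h, by simp only [closure_prod_eq]; exact ⟨⟨ha, hb⟩, hc, hd⟩⟩
  refine hF.continuousWithinAt.mem_closure hclosure ?_
  rintro ⟨⟨a', b'⟩, c', d'⟩ ⟨hD', ⟨ha', hb'⟩, hc', hd'⟩
  exact intersectionPoint_mem_interT ha' hb' hc' hd' hD'

theorem closure_closed_under_intersections_general (K : Set (ℝ × ℝ)) (hK : interT K ⊆ K)
    (U V Q R : ℝ × ℝ) (hU : U ∈ closure K) (hV : V ∈ closure K)
    (hQ : Q ∈ closure K) (hR : R ∈ closure K) (hUV : U ≠ V) (hQR : Q ≠ R)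
    (hnpar : (line U V).direction ≠ (line Q R).direction)
    (X : ℝ × ℝ) (hX₁ : X ∈ line U V) (hX₂ : X ∈ line Q R) :
    X ∈ closure K := by
  have hcross : cross (V - U) (R - Q) ≠ 0 :=
    mt (cross_eq_zero_iff_direction_eq hUV hQR).1 hnpar
  rw [eq_of_mem_line_of_mem_line hcross hX₁ hX₂ (intersectionPoint_mem_left U V Q R)
    (intersectionPoint_mem_right hcross)]
  exact closure_mono hK (intersectionPoint_mem_closure_interT hU hV hQ hR hcross)

/-- If `T(K) ⊆ K` and `U, V, Q, R` lie in the closure of `K`, with the lines `UV` and `QR`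
distinct and not parallel, then the intersection point of the lines `UV` and `QR` also lies
in the closure of `K`. -/
theorem closure_closed_under_intersections (K : Set (ℝ × ℝ)) (hK : interT K ⊆ K)
    (U V Q R : ℝ × ℝ) (hU : U ∈ closure K) (hV : V ∈ closure K)
    (hQ : Q ∈ closure K) (hR : R ∈ closure K) (hUV : U ≠ V) (hQR : Q ≠ R)
    (hne : line U V ≠ line Q R)
    (hnpar : (line U V).direction ≠ (line Q R).direction)
    (X : ℝ × ℝ) (hX₁ : X ∈ line U V) (hX₂ : X ∈ line Q R) :
    X ∈ closure K :=
  closure_closed_under_intersections_general K hK U V Q R hU hV hQ hR hUV hQR hnpar X hX₁ hX₂
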